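/- The language L = { w ∈ {a,b}* : |w|_a ≤ |w|_b ≤ 2·|w|_a } is not accepted by any RDFAwtl. -/

import Mathlib

/-- A nondeterministic finite automaton with translucent letters (NFAwtl). -/
structure NFAwtl (Q α : Type) where
  τ : Q → Set α
  I : Set Q
  F : Set Q
  δ : Q → α → Set Q
  tr : ∀ q a, a ∈ τ q → δ q a = ∅

namespace NFAwtl

variable {Q α : Type}

/-- One computation step of an NFAwtl: delete the leftmost non-translucent letter
and change state (the head returns to the left end). -/
def Step (A : NFAwtl Q α) : Q × List α → Q × List α → Prop := fun c c' =>
  ∃ u a v, c.2 = u ++ a :: v ∧ (∀ x ∈ u, x ∈ A.τ c.1) ∧ a ∉ A.τ c.1 ∧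
    c'.1 ∈ A.δ c.1 a ∧ c'.2 = u ++ v

/-- Acceptance: from some initial state, reach a configuration whose remaining
letters are all translucent for a final state. -/
def Accepts (A : NFAwtl Q α) (w : List α) : Prop :=
  ∃ q₀ ∈ A.I, ∃ q w', Relation.ReflTransGen A.Step (q₀, w) (q, w') ∧
    (∀ x ∈ w', x ∈ A.τ q) ∧ q ∈ A.F

def lang (A : NFAwtl Q α) : Set (List α) := { w | A.Accepts w }

/-- A DFAwtl: single initial state and at most one transition per state/letter. -/
def Deterministic (A : NFAwtl Q α) : Prop :=
  (∃ q₀, A.I = {q₀}) ∧ ∀ q a, (A.δ q a).Subsingleton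

end NFAwtl

/-- A repetitive NFAwtl (RNFAwtl): on the end-of-tape marker it may accept
(states in `Facc`) or change state via `δend` and continue. -/
structure RNFAwtl (Q α : Type) where
  τ : Q → Set α
  I : Set Q
  δ : Q → α → Set Q
  δend : Q → Set Q
  Facc : Set Q
  tr : ∀ q a, a ∈ τ q → δ q a = ∅
  accEnd : ∀ q, q ∈ Facc → δend q = ∅

namespace RNFAwtl

variable {Q α : Type}

/-- One computation step of an RNFAwtl: either delete the leftmost
non-translucent letter, or, when all remaining letters are translucent,
change state via a `◁`-transition and continue. -/
def Step (A : RNFAwtl Q α) : Q × List α → Q × List α → Prop := fun c c' =>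
  (∃ u a v, c.2 = u ++ a :: v ∧ (∀ x ∈ u, x ∈ A.τ c.1) ∧ a ∉ A.τ c.1 ∧
    c'.1 ∈ A.δ c.1 a ∧ c'.2 = u ++ v)
  ∨ ((∀ x ∈ c.2, x ∈ A.τ c.1) ∧ c'.1 ∈ A.δend c.1 ∧ c'.2 = c.2)

def Accepts (A : RNFAwtl Q α) (w : List α) : Prop :=
  ∃ q₀ ∈ A.I, ∃ q w', Relation.ReflTransGen A.Step (q₀, w) (q, w') ∧
    (∀ x ∈ w', x ∈ A.τ q) ∧ q ∈ A.Facc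

def lang (A : RNFAwtl Q α) : Set (List α) := { w | A.Accepts w }

/-- An RDFAwtl: single initial state and deterministic transitions. -/
def Deterministic (A : RNFAwtl Q α) : Prop :=
  (∃ q₀, A.I = {q₀}) ∧ (∀ q a, (A.δ q a).Subsingleton) ∧ ∀ q, (A.δend q).Subsingleton

end RNFAwtl

/-- A non-returning repetitive NFAwtl (nr-NFAwtl): the head continues from the
position of the last deleted letter; on the end-of-tape marker it may change
state and return the head to the left end. -/
structure NrNFAwtl (Q α : Type) where
  τ : Q → Set α
  I : Set Q
  δ : Q → α → Set Q
  δend : Q → Set Q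
  Facc : Set Q
  tr : ∀ q a, a ∈ τ q → δ q a = ∅
  accEnd : ∀ q, q ∈ Facc → δend q = ∅

namespace NrNFAwtl

variable {Q α : Type}

/-- Configurations are `(x, q, w)`: `x` is the already-skipped prefix, the head
is on the first letter of `w`. -/
def Step (A : NrNFAwtl Q α) :
    List α × Q × List α → List α × Q × List α → Prop := fun c c' =>
  (∃ u a v, c.2.2 = u ++ a :: v ∧ (∀ x ∈ u, x ∈ A.τ c.2.1) ∧ a ∉ A.τ c.2.1 ∧
    c'.2.1 ∈ A.δ c.2.1 a ∧ c'.1 = c.1 ++ u ∧ c'.2.2 = v)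
  ∨ ((∀ x ∈ c.2.2, x ∈ A.τ c.2.1) ∧ c'.2.1 ∈ A.δend c.2.1 ∧ c'.1 = [] ∧
    c'.2.2 = c.1 ++ c.2.2)

def Accepts (A : NrNFAwtl Q α) (w : List α) : Prop :=
  ∃ q₀ ∈ A.I, ∃ x q w', Relation.ReflTransGen A.Step ([], q₀, w) (x, q, w') ∧
    (∀ y ∈ w', y ∈ A.τ q) ∧ q ∈ A.Facc

def lang (A : NrNFAwtl Q α) : Set (List α) := { w | A.Accepts w }

def Deterministic (A : NrNFAwtl Q α) : Prop :=
  (∃ q₀, A.I = {q₀}) ∧ (∀ q a, (A.δ q a).Subsingleton) ∧ ∀ q, (A.δend q).Subsingleton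

end NrNFAwtl

/-- A non-repetitive non-returning NFAwtl (nr-nr-NFAwtl): non-returning, and it
must halt as soon as all remaining letters to the right are translucent. -/
structure NrnrNFAwtl (Q α : Type) where
  τ : Q → Set α
  I : Set Q
  F : Set Q
  δ : Q → α → Set Q
  tr : ∀ q a, a ∈ τ q → δ q a = ∅

namespace NrnrNFAwtl

variable {Q α : Type}

def Step (A : NrnrNFAwtl Q α) :
    List α × Q × List α → List α × Q × List α → Prop := fun c c' =>
  ∃ u a v, c.2.2 = u ++ a :: v ∧ (∀ x ∈ u, x ∈ A.τ c.2.1) ∧ a ∉ A.τ c.2.1 ∧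
    c'.2.1 ∈ A.δ c.2.1 a ∧ c'.1 = c.1 ++ u ∧ c'.2.2 = v

def Accepts (A : NrnrNFAwtl Q α) (w : List α) : Prop :=
  ∃ q₀ ∈ A.I, ∃ x q w', Relation.ReflTransGen A.Step ([], q₀, w) (x, q, w') ∧
    (∀ y ∈ w', y ∈ A.τ q) ∧ q ∈ A.F

def lang (A : NrnrNFAwtl Q α) : Set (List α) := { w | A.Accepts w }

def Deterministic (A : NrnrNFAwtl Q α) : Prop :=
  (∃ q₀, A.I = {q₀}) ∧ ∀ q a, (A.δ q a).Subsingleton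

end NrnrNFAwtl

/-- Language classes. -/
def NFAwtlLangs (α : Type) [Fintype α] : Set (Set (List α)) :=
  { L | ∃ (Q : Type) (_ : Fintype Q) (A : NFAwtl Q α), A.lang = L }

def DFAwtlLangs (α : Type) [Fintype α] : Set (Set (List α)) :=
  { L | ∃ (Q : Type) (_ : Fintype Q) (A : NFAwtl Q α), A.Deterministic ∧ A.lang = L }

def RNFAwtlLangs (α : Type) [Fintype α] : Set (Set (List α)) :=
  { L | ∃ (Q : Type) (_ : Fintype Q) (A : RNFAwtl Q α), A.lang = L }

def RDFAwtlLangs (α : Type) [Fintype α] : Set (Set (List α)) :=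
  { L | ∃ (Q : Type) (_ : Fintype Q) (A : RNFAwtl Q α), A.Deterministic ∧ A.lang = L }

def NrNFAwtlLangs (α : Type) [Fintype α] : Set (Set (List α)) :=
  { L | ∃ (Q : Type) (_ : Fintype Q) (A : NrNFAwtl Q α), A.lang = L }

def NrDFAwtlLangs (α : Type) [Fintype α] : Set (Set (List α)) :=
  { L | ∃ (Q : Type) (_ : Fintype Q) (A : NrNFAwtl Q α), A.Deterministic ∧ A.lang = L }

def NrnrNFAwtlLangs (α : Type) [Fintype α] : Set (Set (List α)) :=
  { L | ∃ (Q : Type) (_ : Fintype Q) (A : NrnrNFAwtl Q α), A.lang = L }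

def NrnrDFAwtlLangs (α : Type) [Fintype α] : Set (Set (List α)) :=
  { L | ∃ (Q : Type) (_ : Fintype Q) (A : NrnrNFAwtl Q α), A.Deterministic ∧ A.lang = L }

/-- The two-letter alphabet {a, b}. -/
inductive AB : Type
  | a | b
deriving DecidableEq

instance : Fintype AB where
  elems := {AB.a, AB.b}
  complete := by intro x; cases x <;> simp

/-!
Run a deterministic machine on words `a^x b^y`. While both letters remain, its next step depends
only on its state, so after reaching state `q` having consumed `c` letters `a` and `d` letters `b`,
it accepts `a^x b^y` from `q` iff `a^(x+c) b^(y+d) ∈ L`. The translates of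
`{(x, y) | x ≤ y ≤ 2x}` are pairwise distinct, so distinct counter values `(c, d)` come with
distinct states. Hence only finitely many counter values are reachable, and from a maximal one the
machine can only make end-of-tape moves. It then either accepts every word `a^x b^y` or no such
word with `x, y ≥ 1`, and neither is compatible with `L`.
-/

theorem List.eq_of_append_cons_eq_append_cons {α : Type} {p : α → Prop} {u u' v v' : List α}
    {a a' : α} (h : u ++ a :: v = u' ++ a' :: v') (hu : ∀ x ∈ u, p x) (hu' : ∀ x ∈ u', p x)
    (ha : ¬ p a) (ha' : ¬ p a') : u = u' ∧ a = a' ∧ v = v' := by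
  classical
  have split : ∀ {u v : List α} {a : α}, (∀ x ∈ u, p x) → ¬ p a →
      (u ++ a :: v).takeWhile (p ·) = u ∧ (u ++ a :: v).dropWhile (p ·) = a :: v :=
    fun hu ha => by
      rw [List.takeWhile_append_of_pos (by simpa using hu),
        List.dropWhile_append_of_pos (by simpa using hu),
        List.takeWhile_cons_of_neg (by simpa using ha),
        List.dropWhile_cons_of_neg (by simpa using ha)]
      simp
  obtain ⟨ht, hd⟩ := split (v := v) hu ha
  obtain ⟨ht', hd'⟩ := split (v := v') hu' ha'
  rw [h] at ht hd
  simpa [ht.symm.trans ht'] using hd.symm.trans hd'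

namespace RNFAwtl

variable {Q α : Type} (A : RNFAwtl Q α)

def IsAccepting (c : Q × List α) : Prop :=
  (∀ x ∈ c.2, x ∈ A.τ c.1) ∧ c.1 ∈ A.Facc

def AcceptsFrom (c : Q × List α) : Prop :=
  ∃ e, Relation.ReflTransGen A.Step c e ∧ A.IsAccepting e

variable {A}

theorem accepts_iff_acceptsFrom {q₀ : Q} (hI : A.I = {q₀}) (w : List α) :
    A.Accepts w ↔ A.AcceptsFrom (q₀, w) := by
  simp [Accepts, AcceptsFrom, IsAccepting, hI]

theorem not_step_of_isAccepting {c d : Q × List α} (hc : A.IsAccepting c) : ¬ A.Step c d := by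
  rintro (⟨u, a, v, hc₂, -, ha, -⟩ | ⟨-, hd, -⟩)
  · exact ha (hc.1 a (by simp [hc₂]))
  · simp [A.accEnd _ hc.2] at hd

theorem step_unique (hδ : ∀ q z, (A.δ q z).Subsingleton) (hδend : ∀ q, (A.δend q).Subsingleton)
    {c d d' : Q × List α} (hd : A.Step c d) (hd' : A.Step c d') : d = d' := by
  rcases hd with ⟨u, a, v, hc, hu, ha, hq, hw⟩ | ⟨hall, hq, hw⟩ <;>
    rcases hd' with ⟨u', a', v', hc', hu', ha', hq', hw'⟩ | ⟨hall', hq', hw'⟩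
  · obtain ⟨rfl, rfl, rfl⟩ :=
      List.eq_of_append_cons_eq_append_cons (hc.symm.trans hc') hu hu' ha ha'
    exact Prod.ext (hδ _ _ hq hq') (hw.trans hw'.symm)
  · exact absurd (hall' a (by simp [hc])) ha
  · exact absurd (hall a' (by simp [hc'])) ha'
  · exact Prod.ext (hδend _ hq hq') (hw.trans hw'.symm)

-- Accepting configurations are terminal, so an accepting run from `c` passes through `c'`.
theorem acceptsFrom_iff_of_step (hδ : ∀ q z, (A.δ q z).Subsingleton)
    (hδend : ∀ q, (A.δend q).Subsingleton) {c c' : Q × List α} (h : A.Step c c') :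
    A.AcceptsFrom c ↔ A.AcceptsFrom c' := by
  refine ⟨fun ⟨e, hce, he⟩ => ?_, fun ⟨e, hc'e, he⟩ => ⟨e, hc'e.head h, he⟩⟩
  rcases hce.cases_head with rfl | ⟨c'', hcc'', hc''e⟩
  · exact absurd h (not_step_of_isAccepting he)
  · exact ⟨e, step_unique hδ hδend hcc'' h ▸ hc''e, he⟩

theorem AcceptsFrom.exists_isAccepting_of_invariant {S : Set (Q × List α)}
    (hS : ∀ c ∈ S, ∀ c', A.Step c c' → c' ∈ S) {c : Q × List α} (h : A.AcceptsFrom c)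
    (hc : c ∈ S) : ∃ e ∈ S, A.IsAccepting e := by
  obtain ⟨e, hce, he⟩ := h
  refine ⟨e, ?_, he⟩
  clear he
  induction hce with
  | refl => exact hc
  | tail _ hstep ih => exact hS _ ih _ hstep

end RNFAwtl

def abWord (x y : ℕ) : List AB := List.replicate x .a ++ List.replicate y .b

def betweenSet : Set (ℕ × ℕ) := {p | p.1 ≤ p.2 ∧ p.2 ≤ 2 * p.1}

/-- For `x` large, the slice at `x` of the translate by `v` is the interval
`[x + v.1 - v.2, 2 * x + 2 * v.1 - v.2]`; the probes below are its endpoints. -/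
theorem injective_preimage_add_betweenSet :
    Function.Injective fun v : ℕ × ℕ => (· + v) ⁻¹' betweenSet := by
  rintro ⟨c, d⟩ ⟨c', d'⟩ h
  have probe := fun p => Set.ext_iff.mp h p
  have h₁ := probe (d + d', c + d')
  have h₂ := probe (d + d', c' + d)
  have h₃ := probe (d + d', 2 * c + d + 2 * d')
  have h₄ := probe (d + d', 2 * c' + 2 * d + d')
  simp only [Set.mem_preimage, betweenSet, Set.mem_ofPred_eq, Prod.fst_add, Prod.snd_add]
    at h₁ h₂ h₃ h₄
  ext <;> dsimp only <;> omega

namespace RNFAwtl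

variable {Q : Type} (A : RNFAwtl Q AB)

def abResidual (q : Q) : Set (ℕ × ℕ) := {p | A.AcceptsFrom (q, abWord p.1 p.2)}

/-- A step of `A` from state `q` on a word `a^x b^y` with `x, y ≥ 1`: it enters `q'` and
consumes `e.1` letters `a` and `e.2` letters `b`. -/
inductive ABMove : Q → Q → ℕ × ℕ → Prop
  | delA {q q' : Q} : AB.a ∉ A.τ q → q' ∈ A.δ q .a → ABMove q q' (1, 0)
  | delB {q q' : Q} : AB.a ∈ A.τ q → AB.b ∉ A.τ q → q' ∈ A.δ q .b → ABMove q q' (0, 1)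
  | endTape {q q' : Q} : AB.a ∈ A.τ q → AB.b ∈ A.τ q → q' ∈ A.δend q → ABMove q q' 0

def ABReach (s t : Q × (ℕ × ℕ)) : Prop :=
  ∃ e, A.ABMove s.1 t.1 e ∧ t.2 = s.2 + e

variable {A}

theorem ABMove.step {q q' : Q} {e : ℕ × ℕ} (h : A.ABMove q q' e) (x y : ℕ) :
    A.Step (q, abWord (x + e.1) (y + e.2)) (q', abWord x y) := by
  cases h with
  | delA ha hq' =>
    exact Or.inl ⟨[], .a, abWord x y, by simp [abWord, List.replicate_succ], by simp, ha, hq', rfl⟩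
  | delB ha hb hq' =>
    refine Or.inl ⟨List.replicate x .a, .b, List.replicate y .b, by simp [abWord,
      List.replicate_succ], fun z hz => List.eq_of_mem_replicate hz ▸ ha, hb, hq', rfl⟩
  | endTape ha hb hq' =>
    exact Or.inr ⟨fun z _ => by cases z <;> assumption, hq', by simp⟩

theorem ABMove.exists_of_step {q q' : Q} {w : List AB} {x y : ℕ}
    (h : A.Step (q, abWord (x + 1) (y + 1)) (q', w)) : ∃ e, A.ABMove q q' e := by
  rcases h with ⟨u, z, v, huv, hu, hz, hq', -⟩ | ⟨hall, hq', -⟩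
  · cases z
    · exact ⟨_, .delA hz hq'⟩
    · refine ⟨_, .delB ?_ hz hq'⟩
      cases u with
      | nil => simp [abWord, List.replicate_succ] at huv
      | cons z₀ u =>
        simp only [abWord, List.replicate_succ, List.cons_append, List.cons.injEq] at huv
        exact huv.1 ▸ hu z₀ List.mem_cons_self
  · exact ⟨_, .endTape (hall .a (by simp [abWord])) (hall .b (by simp [abWord])) hq'⟩

theorem ABMove.abResidual_eq (hδ : ∀ q z, (A.δ q z).Subsingleton)
    (hδend : ∀ q, (A.δend q).Subsingleton) {q q' : Q} {e : ℕ × ℕ} (h : A.ABMove q q' e) :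
    A.abResidual q' = (· + e) ⁻¹' A.abResidual q := by
  ext ⟨x, y⟩
  exact (acceptsFrom_iff_of_step hδ hδend (h.step x y)).symm

theorem abResidual_eq_of_reach (hδ : ∀ q z, (A.δ q z).Subsingleton)
    (hδend : ∀ q, (A.δend q).Subsingleton) {q₀ : Q} {s : Q × (ℕ × ℕ)}
    (h : Relation.ReflTransGen A.ABReach (q₀, 0) s) :
    A.abResidual s.1 = (· + s.2) ⁻¹' A.abResidual q₀ := by
  induction h with
  | refl => simp
  | tail _ hst ih =>
    obtain ⟨e, he, hv⟩ := hst
    rw [he.abResidual_eq hδ hδend, ih, hv, Set.preimage_preimage]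
    simp only [add_assoc, add_comm e]

theorem abResidual_eq_univ_of_isAccepting {p : Q} {x y : ℕ}
    (h : A.IsAccepting (p, abWord (x + 1) (y + 1))) : A.abResidual p = Set.univ := by
  refine Set.eq_univ_of_forall fun _ => ⟨_, .refl, fun z _ => ?_, h.2⟩
  cases z
  · exact h.1 .a (by simp [abWord])
  · exact h.1 .b (by simp [abWord])

/-- On a word containing both letters the machine then stays in `T` and never consumes a
letter, so it can only accept in a state where both letters are translucent. -/
theorem exists_abResidual_eq_univ_of_stalled (hδ : ∀ q z, (A.δ q z).Subsingleton)
    (hδend : ∀ q, (A.δend q).Subsingleton) {T : Set Q}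
    (hT : ∀ p ∈ T, ∀ p' e, A.ABMove p p' e → e = 0 ∧ p' ∈ T) {p : Q} (hp : p ∈ T) {x y : ℕ}
    (h : (x + 1, y + 1) ∈ A.abResidual p) : ∃ p' ∈ T, A.abResidual p' = Set.univ := by
  let S : Set (Q × List AB) := {c | ∃ p ∈ T, ∃ x y, c = (p, abWord (x + 1) (y + 1))}
  have hS : ∀ c ∈ S, ∀ c', A.Step c c' → c' ∈ S := by
    rintro _ ⟨p, hp, x, y, rfl⟩ ⟨p', w⟩ hstep
    obtain ⟨e, he⟩ := ABMove.exists_of_step hstep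
    obtain ⟨rfl, hp'⟩ := hT p hp p' e he
    exact ⟨p', hp', x, y, step_unique hδ hδend hstep (he.step (x + 1) (y + 1))⟩
  obtain ⟨_, ⟨p', hp', x', y', rfl⟩, hacc⟩ :=
    AcceptsFrom.exists_isAccepting_of_invariant hS h ⟨p, hp, x, y, rfl⟩
  exact ⟨p', hp', abResidual_eq_univ_of_isAccepting hacc⟩

theorem exists_preimage_add_abResidual_eq_univ_or_notMem [Finite Q]
    (hδ : ∀ q z, (A.δ q z).Subsingleton) (hδend : ∀ q, (A.δend q).Subsingleton) (q₀ : Q)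
    (hinj : Function.Injective fun v : ℕ × ℕ => (· + v) ⁻¹' A.abResidual q₀) :
    ∃ v : ℕ × ℕ, (· + v) ⁻¹' A.abResidual q₀ = Set.univ ∨
      ∀ x y, (x + 1, y + 1) ∉ (· + v) ⁻¹' A.abResidual q₀ := by
  set R := {s | Relation.ReflTransGen A.ABReach (q₀, 0) s}
  have hres : ∀ s ∈ R, A.abResidual s.1 = (· + s.2) ⁻¹' A.abResidual q₀ :=
    fun s hs => abResidual_eq_of_reach hδ hδend hs
  have hfin : R.Finite := Set.Finite.of_finite_image (Set.toFinite (Prod.fst '' R))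
    fun s hs t ht hst => Prod.ext hst <| hinj <| by dsimp only; rw [← hres s hs, ← hres t ht, hst]
  obtain ⟨⟨q, v⟩, hqv, hmax⟩ := R.exists_max_image (fun s => s.2.1 + s.2.2) hfin ⟨_, .refl⟩
  set T : Set Q := {p | (p, v) ∈ R}
  have hstalled : ∀ p ∈ T, ∀ p' e, A.ABMove p p' e → e = 0 ∧ p' ∈ T := by
    intro p hp p' e he
    have hreach : (p', v + e) ∈ R := Relation.ReflTransGen.tail hp ⟨e, he, rfl⟩
    have he0 : e = 0 := by
      have := hmax _ hreach
      simp only [Prod.fst_add, Prod.snd_add] at this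
      ext <;> simp <;> omega
    subst he0
    exact ⟨rfl, show (p', v) ∈ R by simpa using hreach⟩
  refine ⟨v, or_iff_not_imp_right.2 fun h => ?_⟩
  simp only [not_forall, not_not] at h
  obtain ⟨x, y, hxy⟩ := h
  rw [← hres _ hqv] at hxy ⊢
  obtain ⟨p', hp', hp'univ⟩ := exists_abResidual_eq_univ_of_stalled hδ hδend hstalled hqv hxy
  rw [hres _ hqv, ← hp'univ, hres _ hp']

end RNFAwtl

/-- L = { w ∈ {a,b}* : |w|_a ≤ |w|_b ≤ 2·|w|_a } is not accepted
by any RDFAwtl. -/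
theorem between_not_RDFAwtl :
    { w : List AB | w.count AB.a ≤ w.count AB.b ∧ w.count AB.b ≤ 2 * w.count AB.a }
      ∉ RDFAwtlLangs AB := by
  rintro ⟨Q, _, A, ⟨⟨q₀, hI⟩, hδ, hδend⟩, hlang⟩
  have hres₀ : A.abResidual q₀ = betweenSet := by
    ext ⟨x, y⟩
    have := Set.ext_iff.mp hlang (abWord x y)
    simp only [RNFAwtl.lang, Set.mem_ofPred_eq, RNFAwtl.accepts_iff_acceptsFrom hI] at this
    change A.AcceptsFrom (q₀, abWord x y) ↔ x ≤ y ∧ y ≤ 2 * x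
    rw [this]
    simp [abWord, List.count_replicate]
  obtain ⟨⟨c, d⟩, huniv | hempty⟩ := A.exists_preimage_add_abResidual_eq_univ_or_notMem hδ hδend q₀
    (hres₀ ▸ injective_preimage_add_betweenSet)
  · have := huniv ▸ Set.mem_univ (0, 2 * c + 1)
    simp [hres₀, betweenSet] at this
    omega
  · exact hempty d c (by simp [hres₀, betweenSet]; omega)
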